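/- Let g be a polynomial with coefficients in ℚ_p such that g(0) ≠ 0, and let n ≥ 1 be an integer. Then there exists δ > 0 such that for every c ∈ ℚ_p with ‖c‖ < δ, the value g(c) is nonzero and g(c)/g(0) is an n-th power in ℚ_p. (This is the key step in the proof of completeness of the types p_{0,C} in Lemma 2.1: for a polynomial f(X) = aᵢXⁱ + ⋯ + a_mX^m with lowest nonzero coefficient aᵢ, the coset of f(c) modulo n-th powers agrees with that of aᵢcⁱ for all c of sufficiently small nonzero norm.) -/

import Mathlib

/-!
By continuity `g(c) / g(0) → 1` as `c → 0`, and by Hensel's lemma applied to `Xⁿ - a` at the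
approximate root `1` (where the derivative is `n`), every `a` with `‖a - 1‖ < ‖n‖²` is an `n`-th
power. Since `‖n‖ ≤ 1`, such an `a` is also nonzero.
-/

open Polynomial Filter Topology

namespace PadicInt

variable {p : ℕ} [Fact p.Prime]

theorem exists_pow_eq_of_norm_sub_one_lt {n : ℕ} {a : ℤ_[p]}
    (ha : ‖a - 1‖ < ‖(n : ℤ_[p])‖ ^ 2) : ∃ z : ℤ_[p], z ^ n = a := by
  let F : ℤ_[p][X] := X ^ n - C a
  have hnorm : ‖F.aeval (1 : ℤ_[p])‖ < ‖F.derivative.aeval (1 : ℤ_[p])‖ ^ 2 := by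
    simpa [F, derivative_X_pow, norm_sub_rev] using ha
  obtain ⟨z, hz, -⟩ := hensels_lemma hnorm
  exact ⟨z, by simpa [F, sub_eq_zero] using hz⟩

end PadicInt

namespace Padic

variable {p : ℕ} [Fact p.Prime]

theorem exists_pow_eq_of_norm_sub_one_lt {n : ℕ} {a : ℚ_[p]}
    (ha : ‖a - 1‖ < ‖(n : ℚ_[p])‖ ^ 2) : ∃ y : ℚ_[p], y ^ n = a := by
  have hn : ‖(n : ℚ_[p])‖ ^ 2 ≤ 1 :=
    pow_le_one₀ (norm_nonneg _) (IsUltrametricDist.norm_natCast_le_one _ n)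
  have ha₁ : ‖a‖ ≤ 1 := by
    simpa using (IsUltrametricDist.norm_add_one_le_max_norm_one (a - 1)).trans
      (max_le (ha.trans_le hn).le le_rfl)
  obtain ⟨z, hz⟩ := PadicInt.exists_pow_eq_of_norm_sub_one_lt (a := ⟨a, ha₁⟩) ha
  exact ⟨z, congrArg ((↑) : ℤ_[p] → ℚ_[p]) hz⟩

end Padic

/-- Key step in completeness of the types `p_{0,C}`: if `g(0) ≠ 0` then for all `c` of
sufficiently small norm, `g(c) ≠ 0` and `g(c)/g(0)` is an `n`-th power. -/
theorem polynomial_eval_near_zero_same_coset (p : ℕ) [Fact p.Prime]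
    (g : Polynomial ℚ_[p]) (hg : g.eval 0 ≠ 0) (n : ℕ) (hn : 1 ≤ n) :
    ∃ δ : ℝ, 0 < δ ∧ ∀ c : ℚ_[p], ‖c‖ < δ →
      g.eval c ≠ 0 ∧ ∃ y : ℚ_[p], g.eval c / g.eval 0 = y ^ n := by
  have hn₀ : 0 < ‖(n : ℚ_[p])‖ := norm_pos_iff.mpr (Nat.cast_ne_zero.mpr (by omega))
  have hlim : Tendsto (fun c => g.eval c / g.eval 0) (𝓝 0) (𝓝 1) := by
    simpa [div_self hg] using (g.continuous.tendsto 0).div_const (g.eval 0)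
  obtain ⟨δ, hδ, hball⟩ := Metric.tendsto_nhds_nhds.mp hlim _ (pow_pos hn₀ 2)
  refine ⟨δ, hδ, fun c hc => ?_⟩
  have hclose : ‖g.eval c / g.eval 0 - 1‖ < ‖(n : ℚ_[p])‖ ^ 2 := by
    simpa [dist_eq_norm] using hball (by simpa using hc)
  refine ⟨fun h0 => ?_, (Padic.exists_pow_eq_of_norm_sub_one_lt hclose).imp fun _ => Eq.symm⟩
  simp only [h0, zero_div, zero_sub, norm_neg, norm_one] at hclose
  exact hclose.not_ge (pow_le_one₀ hn₀.le (IsUltrametricDist.norm_natCast_le_one _ n))
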